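/- Let f(x,t) solve the heat equation ∂_t f = ∂²_x f on ℝ with bounded initial data f(x,0) = sin(x)/(1+x²). Then for each fixed t₀ > 0, f(x,t₀) = O(|x|^{−2}) as |x| → ∞, but it is not true that f(x,t₀) = o(|x|^{−2}); in particular the spatial decay rate of the solution does not improve for positive time. -/

import Mathlib

/-!
Since `sin'' = -sin`, the function `e^{-t} sin x / (1 + x²)` solves the heat equation up to
terms in which derivatives fall on `(1 + x²)⁻¹`; these are `O(⟨x⟩⁻³)`, where `⟨x⟩ = √(1 + x²)`.
Bounded solutions obey the minimum principle (add `ε (x² + 3t)`, which makes a supersolution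
strict and confines its negative minimum to a compact cylinder, and look at that minimum), so the
barrier `(e^{15t} - 1) ⟨x⟩⁻³` gives `|f(x,t) - e^{-t} sin x / (1 + x²)| ≤ (e^{15t} - 1) ⟨x⟩⁻³`.
Thus `f(·,t₀)` is `e^{-t₀}` times the initial datum up to `o(x⁻²)`, and the initial datum is
`O(x⁻²)` but not `o(x⁻²)`, as its values at the peaks `π/2 + 2πn` of `sin` show.
-/

open Filter Asymptotics Real Set Topology

theorem IsLocalMin.deriv_deriv_nonneg {g : ℝ → ℝ} {x : ℝ} (hmin : IsLocalMin g x)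
    (hc : ContinuousAt g x) : 0 ≤ deriv (deriv g) x := by
  by_contra! hneg
  -- otherwise `x` is also a local maximum, so `g` is locally constant and `g'' x = 0`
  have hconst : g =ᶠ[𝓝 x] fun _ => g x :=
    ((isLocalMax_of_deriv_deriv_neg hneg hmin.deriv_eq_zero hc).and hmin).mono
      fun y hy => le_antisymm hy.1 hy.2
  simp only [hconst.deriv.deriv_eq, deriv_const', lt_self_iff_false] at hneg

theorem IsMinOn.hasDerivAt_nonpos {k : ℝ → ℝ} {a b d : ℝ} (hab : a < b)
    (hmin : IsMinOn k (Icc a b) b) (hd : HasDerivAt k d b) : d ≤ 0 := by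
  have hcone : a - b ∈ posTangentConeAt (Icc a b) b :=
    sub_mem_posTangentConeAt_of_segment_subset (segment_symm ℝ b a ▸ segment_subset_Icc hab.le)
  have := hmin.localize.hasFDerivWithinAt_nonneg hd.hasDerivWithinAt.hasFDerivWithinAt hcone
  simp only [ContinuousLinearMap.toSpanSingleton_apply, smul_eq_mul] at this
  nlinarith

theorem deriv_deriv_fun_add {F G : ℝ → ℝ} (hF : ContDiff ℝ 2 F) (hG : ContDiff ℝ 2 G) (x : ℝ) :
    deriv (deriv (fun y => F y + G y)) x = deriv (deriv F) x + deriv (deriv G) x := by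
  simpa only [iteratedDeriv_succ, iteratedDeriv_zero] using
    iteratedDeriv_fun_add hF.contDiffAt hG.contDiffAt

theorem deriv_deriv_fun_sub {F G : ℝ → ℝ} (hF : ContDiff ℝ 2 F) (hG : ContDiff ℝ 2 G) (x : ℝ) :
    deriv (deriv (fun y => F y - G y)) x = deriv (deriv F) x - deriv (deriv G) x := by
  simpa only [iteratedDeriv_succ, iteratedDeriv_zero] using
    iteratedDeriv_fun_sub hF.contDiffAt hG.contDiffAt

theorem deriv_deriv_eq_of_hasDerivAt {g g' : ℝ → ℝ} {g'' x : ℝ}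
    (hg : ∀ y, HasDerivAt g (g' y) y) (hg' : HasDerivAt g' g'' x) : deriv (deriv g) x = g'' := by
  rw [funext fun y => (hg y).deriv]
  exact hg'.deriv

theorem exists_pos_add_mul_neg {a : ℝ} (ha : a < 0) (c : ℝ) : ∃ ε > 0, a + ε * c < 0 := by
  have hlim : Tendsto (fun ε => a + ε * c) (𝓝 0) (𝓝 a) := by
    simpa using ((continuous_id.mul continuous_const).const_add a).tendsto (0 : ℝ)
  exact (eventually_mem_nhdsWithin.and
    (nhdsWithin_le_nhds (hlim.eventually (gt_mem_nhds ha)))).exists (f := 𝓝[>] 0)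

theorem not_min_of_heat_supersolution_add_penalty {w : ℝ → ℝ → ℝ} {x₁ t₁ d ε : ℝ}
    (ht₁ : 0 < t₁) (hε : 0 < ε) (hC2 : ContDiff ℝ 2 (w · t₁)) (hd : HasDerivAt (w x₁ ·) d t₁)
    (hsuper : deriv (deriv (w · t₁)) x₁ ≤ d)
    (hspace : IsLocalMin (fun y => w y t₁ + ε * y ^ 2) x₁)
    (htime : IsMinOn (fun s => w x₁ s + 3 * ε * s) (Icc 0 t₁) t₁) : False := by
  have hquad : ∀ x, deriv (deriv fun y => ε * y ^ 2) x = ε * 2 := fun x =>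
    deriv_deriv_eq_of_hasDerivAt (fun y => by simpa using (hasDerivAt_pow 2 y).const_mul ε)
      (by simpa using ((hasDerivAt_id x).const_mul 2).const_mul ε)
  have hspace' := hspace.deriv_deriv_nonneg (hC2.continuous.add (by fun_prop)).continuousAt
  rw [deriv_deriv_fun_add hC2 (by fun_prop), hquad] at hspace'
  have htime' := htime.hasDerivAt_nonpos ht₁ (hd.add ((hasDerivAt_id t₁).const_mul (3 * ε)))
  rw [mul_one] at htime'
  linarith

theorem heat_supersolution_nonneg {w : ℝ → ℝ → ℝ}
    (hcont : ContinuousOn (fun p : ℝ × ℝ => w p.1 p.2) {p | 0 ≤ p.2})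
    (hbdd : ∃ M, ∀ x t, 0 ≤ t → M ≤ w x t) (hinit : ∀ x, 0 ≤ w x 0)
    (hC2 : ∀ t, 0 < t → ContDiff ℝ 2 (w · t))
    (hsuper : ∀ x t, 0 < t → ∃ d, HasDerivAt (w x ·) d t ∧ deriv (deriv (w · t)) x ≤ d)
    {x₀ t₀ : ℝ} (ht₀ : 0 ≤ t₀) : 0 ≤ w x₀ t₀ := by
  obtain ⟨M, hM⟩ := hbdd
  by_contra! hneg
  obtain ⟨ε, hε, hΦ₀⟩ := exists_pos_add_mul_neg hneg (x₀ ^ 2 + 3 * t₀)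
  obtain ⟨R, hR, hRM⟩ : ∃ R, |x₀| < R ∧ 0 ≤ M + ε * R ^ 2 :=
    ((eventually_gt_atTop _).and (tendsto_atTop_add_const_left _ M
      ((tendsto_pow_atTop two_ne_zero).const_mul_atTop hε) |>.eventually_ge_atTop 0)).exists
  set Φ : ℝ × ℝ → ℝ := fun p => w p.1 p.2 + ε * (p.1 ^ 2 + 3 * p.2)
  have hx₀ : (x₀, t₀) ∈ Icc (-R) R ×ˢ Icc 0 t₀ := ⟨abs_le.mp hR.le, ht₀, le_rfl⟩
  obtain ⟨⟨x₁, t₁⟩, ⟨hx₁R, ht₁t₀⟩, hmin⟩ := (isCompact_Icc.prod isCompact_Icc).exists_isMinOn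
    ⟨_, hx₀⟩ ((hcont.mono fun p hp => hp.2.1).add (by fun_prop) : ContinuousOn Φ _)
  have hΦ₁ : Φ (x₁, t₁) < 0 := (hmin hx₀).trans_lt hΦ₀
  have ht₁ : 0 < t₁ := by
    refine ht₁t₀.1.lt_of_ne fun h => hΦ₁.not_ge ?_
    subst h
    have := hinit x₁
    dsimp [Φ]
    positivity
  have hx₁ : |x₁| < R := by
    refine (abs_le.mpr hx₁R).lt_of_ne fun h => hΦ₁.not_ge ?_
    have := hM x₁ t₁ ht₁.le
    have : x₁ ^ 2 = R ^ 2 := by rw [← sq_abs, h]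
    dsimp [Φ]
    nlinarith
  obtain ⟨d, hd, hdle⟩ := hsuper x₁ t₁ ht₁
  refine not_min_of_heat_supersolution_add_penalty ht₁ hε (hC2 t₁ ht₁) hd hdle ?_ ?_
  · filter_upwards [Icc_mem_nhds (abs_lt.mp hx₁).1 (abs_lt.mp hx₁).2] with y hy
    have : Φ (x₁, t₁) ≤ Φ (y, t₁) := hmin ⟨hy, ht₁t₀⟩
    dsimp [Φ] at this
    linarith
  · intro s hs
    have : Φ (x₁, t₁) ≤ Φ (x₁, s) := hmin ⟨hx₁R, hs.1, hs.2.trans ht₁t₀.2⟩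
    dsimp [Φ] at this ⊢
    linarith

theorem abs_le_of_heat_comparison {u V : ℝ → ℝ → ℝ}
    (hu : ContinuousOn (fun p : ℝ × ℝ => u p.1 p.2) {p | 0 ≤ p.2})
    (hV : ContinuousOn (fun p : ℝ × ℝ => V p.1 p.2) {p | 0 ≤ p.2})
    (hu_bdd : ∃ C, ∀ x t, 0 ≤ t → |u x t| ≤ C) (hV_nonneg : ∀ x t, 0 ≤ t → 0 ≤ V x t)
    (hinit : ∀ x, |u x 0| ≤ V x 0)
    (hu2 : ∀ t, 0 < t → ContDiff ℝ 2 (u · t)) (hV2 : ∀ t, 0 < t → ContDiff ℝ 2 (V · t))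
    (hdom : ∀ x t, 0 < t → ∃ a b, HasDerivAt (u x ·) a t ∧ HasDerivAt (V x ·) b t ∧
      |a - deriv (deriv (u · t)) x| ≤ b - deriv (deriv (V · t)) x)
    {x t : ℝ} (ht : 0 ≤ t) : |u x t| ≤ V x t := by
  obtain ⟨C, hC⟩ := hu_bdd
  suffices key : ∀ σ : ℝ, |σ| = 1 → 0 ≤ V x t - σ * u x t by
    have h₁ := key 1 (by simp)
    have h₂ := key (-1) (by simp)
    rw [abs_le]
    constructor <;> linarith
  intro σ hσ
  have hσ_le : ∀ y : ℝ, σ * y ≤ |y| := fun y => by simpa [abs_mul, hσ] using le_abs_self (σ * y)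
  refine heat_supersolution_nonneg (w := fun x t => V x t - σ * u x t)
    (hV.sub (continuousOn_const.mul hu)) ⟨-C, fun x t ht => ?_⟩
    (fun x => by linarith [hσ_le (u x 0), hinit x])
    (fun t ht => (hV2 t ht).sub (contDiff_const.mul (hu2 t ht))) (fun x t ht => ?_) ht
  · linarith [hσ_le (u x t), hC x t ht, hV_nonneg x t ht]
  obtain ⟨a, b, ha, hb, hab⟩ := hdom x t ht
  refine ⟨b - σ * a, hb.sub (ha.const_mul σ), ?_⟩
  rw [deriv_deriv_fun_sub (hV2 t ht) (contDiff_const.mul (hu2 t ht)), deriv_const_mul_field',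
    deriv_const_mul_field']
  linarith [hσ_le (a - deriv (deriv (u · t)) x)]

section InvBracket

/-- `invBracket s x = ⟨x⟩⁻ˢ` for the Japanese bracket `⟨x⟩ = √(1 + x²)`. -/
noncomputable def invBracket (s x : ℝ) : ℝ := (1 + x ^ 2) ^ (-s / 2)

variable (s s' x : ℝ)

theorem one_add_sq_pos : 0 < 1 + x ^ 2 := by positivity

theorem invBracket_pos : 0 < invBracket s x := rpow_pos_of_pos (one_add_sq_pos x) _

theorem invBracket_add : invBracket (s + s') x = invBracket s x * invBracket s' x := by
  rw [invBracket, invBracket, invBracket, ← rpow_add (one_add_sq_pos x)]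
  ring_nf

theorem invBracket_two : invBracket 2 x = (1 + x ^ 2)⁻¹ := by
  rw [invBracket, show -(2 : ℝ) / 2 = -1 by norm_num, rpow_neg_one]

theorem invBracket_neg_two : invBracket (-2) x = 1 + x ^ 2 := by
  rw [invBracket, show -(-2 : ℝ) / 2 = 1 by norm_num, rpow_one]

theorem abs_le_invBracket_neg_one : |x| ≤ invBracket (-1) x := by
  rw [invBracket, show -(-1 : ℝ) / 2 = 1 / 2 by norm_num, ← sqrt_eq_rpow, ← sqrt_sq_eq_abs]
  exact sqrt_le_sqrt (by linarith)

variable {s s'} in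
theorem invBracket_le_invBracket (h : s ≤ s') : invBracket s' x ≤ invBracket s x :=
  rpow_le_rpow_of_exponent_le (by nlinarith [sq_nonneg x]) (by linarith)

theorem sq_mul_invBracket_add_two_le : x ^ 2 * invBracket (s + 2) x ≤ invBracket s x :=
  calc x ^ 2 * invBracket (s + 2) x ≤ invBracket (-2) x * invBracket (s + 2) x := by
        rw [invBracket_neg_two]
        gcongr
        · exact (invBracket_pos _ _).le
        · linarith
    _ = invBracket s x := by rw [← invBracket_add]; ring_nf

theorem abs_mul_invBracket_add_one_le : |x| * invBracket (s + 1) x ≤ invBracket s x :=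
  calc |x| * invBracket (s + 1) x ≤ invBracket (-1) x * invBracket (s + 1) x :=
        mul_le_mul_of_nonneg_right (abs_le_invBracket_neg_one x) (invBracket_pos _ _).le
    _ = invBracket s x := by rw [← invBracket_add]; ring_nf

theorem hasDerivAt_invBracket : HasDerivAt (invBracket s) (-s * x * invBracket (s + 2) x) x := by
  refine (((hasDerivAt_pow 2 x).const_add 1).rpow_const (p := -s / 2)
    (.inl (one_add_sq_pos x).ne')).congr_deriv ?_
  rw [invBracket, show -(s + 2) / 2 = -s / 2 - 1 by ring]
  push_cast
  ring

theorem hasDerivAt_deriv_invBracket : HasDerivAt (fun y => -s * y * invBracket (s + 2) y)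
    (s * (s + 2) * x ^ 2 * invBracket (s + 4) x - s * invBracket (s + 2) x) x := by
  refine (((hasDerivAt_id x).const_mul (-s)).mul (hasDerivAt_invBracket (s + 2) x)).congr_deriv ?_
  rw [show s + 2 + 2 = s + 4 by ring, id]
  ring

theorem deriv_deriv_invBracket : deriv (deriv (invBracket s)) x =
    s * (s + 2) * x ^ 2 * invBracket (s + 4) x - s * invBracket (s + 2) x :=
  deriv_deriv_eq_of_hasDerivAt (hasDerivAt_invBracket s) (hasDerivAt_deriv_invBracket s x)

theorem deriv_deriv_invBracket_three_le : deriv (deriv (invBracket 3)) x ≤ 15 * invBracket 3 x := by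
  have h₁ : x ^ 2 * invBracket 7 x ≤ invBracket 5 x := by
    convert sq_mul_invBracket_add_two_le 5 x using 3
    norm_num
  have h₂ : invBracket 5 x ≤ invBracket 3 x := invBracket_le_invBracket x (by norm_num)
  have h₃ := invBracket_pos 5 x
  rw [deriv_deriv_invBracket, show (3 : ℝ) + 4 = 7 by norm_num, show (3 : ℝ) + 2 = 5 by norm_num]
  nlinarith

theorem contDiff_invBracket {n : WithTop ℕ∞} : ContDiff ℝ n (invBracket s) :=
  (contDiff_const.add (contDiff_id.pow 2)).rpow_const_of_ne fun x => (one_add_sq_pos x).ne'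

variable {s} in
theorem tendsto_invBracket_cocompact (hs : 0 < s) :
    Tendsto (invBracket s) (cocompact ℝ) (𝓝 0) := by
  have : Tendsto (fun x : ℝ => 1 + x ^ 2) (cocompact ℝ) atTop :=
    (tendsto_atTop_add_const_left _ 1 ((tendsto_pow_atTop two_ne_zero).comp
      tendsto_norm_cocompact_atTop)).congr fun x => by simp
  exact (tendsto_rpow_neg_atTop (y := s / 2) (by positivity)).comp this |>.congr
    fun x => by simp [invBracket, neg_div]

theorem invBracket_two_isBigO : invBracket 2 =O[cocompact ℝ] fun x => (x ^ 2)⁻¹ := by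
  refine .of_bound'
    (((eventually_cofinite_ne 0).filter_mono cocompact_le_cofinite).mono fun x hx => ?_)
  rw [invBracket_two, norm_inv, norm_inv, norm_of_nonneg (one_add_sq_pos x).le,
    norm_of_nonneg (sq_nonneg x)]
  exact inv_anti₀ (by positivity) (by linarith)

variable {s} in
theorem invBracket_isLittleO (hs : 2 < s) : invBracket s =o[cocompact ℝ] fun x => (x ^ 2)⁻¹ := by
  have := invBracket_two_isBigO.mul_isLittleO
    ((isLittleO_one_iff ℝ).mpr (tendsto_invBracket_cocompact (sub_pos.mpr hs)))
  simpa [← invBracket_add, mul_one] using this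

end InvBracket

section InitialDatum

noncomputable def initialDatum (x : ℝ) : ℝ := sin x * invBracket 2 x

variable (x : ℝ)

theorem initialDatum_eq_div : initialDatum x = sin x / (1 + x ^ 2) := by
  rw [initialDatum, invBracket_two, div_eq_mul_inv]

theorem abs_initialDatum_le_invBracket : |initialDatum x| ≤ invBracket 2 x := by
  rw [initialDatum, abs_mul, abs_of_pos (invBracket_pos 2 x)]
  exact mul_le_of_le_one_left (invBracket_pos 2 x).le (abs_sin_le_one x)

theorem abs_initialDatum_le_one : |initialDatum x| ≤ 1 :=
  (abs_initialDatum_le_invBracket x).trans <| by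
    rw [invBracket_two]
    exact inv_le_one_of_one_le₀ (by nlinarith [sq_nonneg x])

theorem contDiff_initialDatum {n : WithTop ℕ∞} : ContDiff ℝ n initialDatum :=
  contDiff_sin.mul (contDiff_invBracket 2)

theorem initialDatum_add_deriv_deriv :
    initialDatum x + deriv (deriv initialDatum) x =
      -4 * x * cos x * invBracket 4 x + sin x * (8 * x ^ 2 * invBracket 6 x - 2 * invBracket 4 x) := by
  have h₁ : ∀ y, HasDerivAt initialDatum
      (cos y * invBracket 2 y + sin y * (-2 * y * invBracket 4 y)) y := fun y => by
    have h := (hasDerivAt_sin y).mul (hasDerivAt_invBracket 2 y)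
    rwa [show (2 : ℝ) + 2 = 4 by norm_num] at h
  have h₂ := ((hasDerivAt_cos x).mul (hasDerivAt_invBracket 2 x)).add
    ((hasDerivAt_sin x).mul (hasDerivAt_deriv_invBracket 2 x))
  rw [show (2 : ℝ) + 2 = 4 by norm_num, show (2 : ℝ) + 4 = 6 by norm_num] at h₂
  rw [deriv_deriv_eq_of_hasDerivAt h₁ h₂, initialDatum]
  ring

theorem abs_initialDatum_add_deriv_deriv_le :
    |initialDatum x + deriv (deriv initialDatum) x| ≤ 14 * invBracket 3 x := by
  have h₁ : |x * invBracket 4 x| ≤ invBracket 3 x := by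
    rw [abs_mul, abs_of_pos (invBracket_pos 4 x)]
    convert abs_mul_invBracket_add_one_le 3 x using 3
    norm_num
  have h₂ : x ^ 2 * invBracket 6 x ≤ invBracket 4 x := by
    convert sq_mul_invBracket_add_two_le 4 x using 3
    norm_num
  have h₃ : invBracket 4 x ≤ invBracket 3 x := invBracket_le_invBracket x (by norm_num)
  have h₄ : |8 * x ^ 2 * invBracket 6 x - 2 * invBracket 4 x| ≤ 10 * invBracket 3 x := by
    have := mul_nonneg (sq_nonneg x) (invBracket_pos 6 x).le
    rw [abs_le]
    constructor <;> nlinarith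
  rw [initialDatum_add_deriv_deriv]
  calc _ = |-4 * cos x * (x * invBracket 4 x) +
        sin x * (8 * x ^ 2 * invBracket 6 x - 2 * invBracket 4 x)| := by ring_nf
    _ ≤ 4 * |cos x| * |x * invBracket 4 x| +
        |sin x| * |8 * x ^ 2 * invBracket 6 x - 2 * invBracket 4 x| :=
      (abs_add_le _ _).trans_eq (by rw [abs_mul, abs_mul, abs_mul]; norm_num)
    _ ≤ 4 * 1 * invBracket 3 x + 1 * (10 * invBracket 3 x) := by
      gcongr
      exacts [abs_cos_le_one x, abs_sin_le_one x]
    _ = 14 * invBracket 3 x := by ring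

theorem initialDatum_isBigO : initialDatum =O[cocompact ℝ] fun x => (x ^ 2)⁻¹ :=
  (isBigO_of_le _ fun x => by
    simpa [abs_of_pos (invBracket_pos 2 x)] using abs_initialDatum_le_invBracket x).trans
    invBracket_two_isBigO

theorem initialDatum_not_isLittleO : ¬ initialDatum =o[cocompact ℝ] fun x => (x ^ 2)⁻¹ := by
  intro h
  have hpeaks : Tendsto (fun n : ℕ => π / 2 + n * (2 * π)) atTop atTop :=
    tendsto_atTop_add_const_left _ _ (tendsto_natCast_atTop_atTop.atTop_mul_const (by positivity))
  obtain ⟨n, hsmall, hlarge⟩ := (hpeaks.eventually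
    (((h.def (by norm_num : (0 : ℝ) < 1 / 2)).filter_mono atTop_le_cocompact).and
      (eventually_gt_atTop 1))).exists
  set y := π / 2 + n * (2 * π)
  have hsin : sin y = 1 := by rw [sin_add_nat_mul_two_pi, sin_pi_div_two]
  rw [initialDatum_eq_div, hsin, norm_div, norm_inv, norm_one, norm_of_nonneg (by positivity),
    norm_of_nonneg (by positivity)] at hsmall
  have : 2 * y ^ 2 ≤ 1 + y ^ 2 := by
    field_simp at hsmall
    linarith
  nlinarith

end InitialDatum

/-- The left side is `|(∂ₜ - ∂ₓ²)(e^{-t} · initialDatum)|`, the right side is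
`(∂ₜ - ∂ₓ²)((e^{15t} - 1) ⟨x⟩⁻³)`. -/
theorem abs_exp_neg_mul_heat_defect_le {t : ℝ} (ht : 0 ≤ t) (x : ℝ) :
    |exp (-t) * (initialDatum x + deriv (deriv initialDatum) x)| ≤
      15 * exp (15 * t) * invBracket 3 x - (exp (15 * t) - 1) * deriv (deriv (invBracket 3)) x := by
  have hexp : exp (-t) ≤ 1 := exp_le_one_iff.mpr (by linarith)
  have hgrowth : 0 ≤ exp (15 * t) - 1 := sub_nonneg.mpr (one_le_exp (by positivity))
  have h₁ := abs_initialDatum_add_deriv_deriv_le x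
  have h₂ := mul_le_mul_of_nonneg_left (deriv_deriv_invBracket_three_le x) hgrowth
  have h₃ := invBracket_pos 3 x
  rw [abs_mul, abs_of_pos (exp_pos _)]
  nlinarith [mul_le_mul hexp h₁ (abs_nonneg _) zero_le_one]

theorem abs_sub_exp_neg_mul_initialDatum_le (f : ℝ → ℝ → ℝ)
    (hcont : ContinuousOn (fun p : ℝ × ℝ => f p.1 p.2) {p | 0 ≤ p.2})
    (hbdd : ∃ C, ∀ x t, 0 ≤ t → |f x t| ≤ C)
    (hinit : ∀ x, f x 0 = initialDatum x)
    (hsmooth : ∀ t, 0 < t → ContDiff ℝ 2 (f · t))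
    (hheat : ∀ x t, 0 < t → HasDerivAt (f x ·) (deriv (deriv (f · t)) x) t)
    {x t : ℝ} (ht : 0 ≤ t) :
    |f x t - exp (-t) * initialDatum x| ≤ (exp (15 * t) - 1) * invBracket 3 x := by
  obtain ⟨C, hC⟩ := hbdd
  have hp := contDiff_initialDatum (n := 2)
  have hr := contDiff_invBracket (n := 2) 3
  have hpc := hp.continuous
  have hrc := hr.continuous
  refine abs_le_of_heat_comparison (u := fun x t => f x t - exp (-t) * initialDatum x)
    (V := fun x t => (exp (15 * t) - 1) * invBracket 3 x)
    (hcont.sub (by fun_prop)) (by fun_prop) ⟨C + 1, fun x t ht => ?_⟩ (fun x t ht => ?_)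
    (fun x => by simp [hinit]) (fun t ht => (hsmooth t ht).sub (contDiff_const.mul hp))
    (fun t _ => contDiff_const.mul hr) (fun x t ht => ?_) ht
  · calc |f x t - exp (-t) * initialDatum x| ≤ |f x t| + exp (-t) * |initialDatum x| := by
          simpa [abs_mul] using abs_sub (f x t) (exp (-t) * initialDatum x)
      _ ≤ C + 1 * 1 := by
          gcongr
          exacts [hC x t ht, exp_le_one_iff.mpr (by linarith), abs_initialDatum_le_one x]
      _ = C + 1 := by ring
  · exact mul_nonneg (sub_nonneg.mpr (one_le_exp (by positivity))) (invBracket_pos 3 x).le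
  · refine ⟨deriv (deriv (f · t)) x + exp (-t) * initialDatum x,
      15 * exp (15 * t) * invBracket 3 x, ?_, ?_, ?_⟩
    · simpa using (hheat x t ht).fun_sub ((hasDerivAt_neg t).exp.mul_const (initialDatum x))
    · simpa [mul_comm] using (((hasDerivAt_id t).const_mul 15).exp.sub_const 1).mul_const
        (invBracket 3 x)
    · rw [deriv_deriv_fun_sub (hsmooth t ht) (contDiff_const.mul hp), deriv_const_mul_field',
        deriv_const_mul_field', deriv_const_mul_field', deriv_const_mul_field']
      convert abs_exp_neg_mul_heat_defect_le ht.le x using 2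
      ring

/-- The bounded solution of the heat equation on `ℝ` with initial data `sin(x)/(1+x²)`
decays like `|x|⁻²` for each positive time, and this decay rate does not improve. -/
theorem heat_no_improved_decay (f : ℝ → ℝ → ℝ)
    (hcont : ContinuousOn (fun p : ℝ × ℝ => f p.1 p.2) {p : ℝ × ℝ | 0 ≤ p.2})
    (hbdd : ∃ C : ℝ, ∀ x t : ℝ, 0 ≤ t → |f x t| ≤ C)
    (hinit : ∀ x : ℝ, f x 0 = Real.sin x / (1 + x ^ 2))
    (hsmooth : ∀ t : ℝ, 0 < t → ContDiff ℝ 2 (fun y => f y t))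
    (hheat : ∀ x : ℝ, ∀ t : ℝ, 0 < t →
      HasDerivAt (fun s => f x s) (deriv (deriv (fun y => f y t)) x) t) :
    ∀ t₀ : ℝ, 0 < t₀ →
      ((fun x => f x t₀) =O[cocompact ℝ] fun x => (x ^ 2)⁻¹) ∧
      ¬ ((fun x => f x t₀) =o[cocompact ℝ] fun x => (x ^ 2)⁻¹) := by
  intro t₀ ht₀
  have herr : (fun x => f x t₀ - exp (-t₀) * initialDatum x) =o[cocompact ℝ]
      fun x => (x ^ 2)⁻¹ := by
    refine (IsBigO.of_bound (exp (15 * t₀) - 1) (Eventually.of_forall fun x => ?_)).trans_isLittleO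
      (invBracket_isLittleO (by norm_num : (2 : ℝ) < 3))
    rw [norm_eq_abs, norm_of_nonneg (invBracket_pos 3 x).le]
    exact abs_sub_exp_neg_mul_initialDatum_le f hcont hbdd
      (fun x => (hinit x).trans (initialDatum_eq_div x).symm) hsmooth hheat ht₀.le
  refine ⟨?_, fun h => initialDatum_not_isLittleO ?_⟩
  · simpa using herr.isBigO.add (initialDatum_isBigO.const_mul_left (exp (-t₀)))
  · simpa [← mul_assoc, ← exp_add] using (h.sub herr).const_mul_left (exp t₀)
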